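/- arXiv:2311.09420 — 2 statements merged into one kernel-verified Lean document; each statement's English description precedes it below -/
import Mathlib

section
/- Let f : ℝ³ → (0,∞) be C³ and let e ∈ S². Then ∫_{S²} ( b_e·∇(b_e·∇ log f)(σ) )²·f(σ) dσ ≥ 4·∫_{S²} ( b_e·∇(b_e·∇ √f)(σ) )² dσ, where the vector field b_e is defined by b_e(z) = e × z. -/
open MeasureTheory Real Set Metric Matrix
open scoped ENNReal

noncomputable section

abbrev E3 := EuclideanSpace ℝ (Fin 3)

/-- The cross product on `ℝ³`. -/
def cross3 (a z : E3) : E3 :=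
  WithLp.toLp 2 ![a 1 * z 2 - a 2 * z 1, a 2 * z 0 - a 0 * z 2, a 0 * z 1 - a 1 * z 0]

/-- The vector field `b_k(z) = e_k × z`. -/
def bvec (k : Fin 3) (z : E3) : E3 := cross3 (EuclideanSpace.single k 1) z

/-- Directional derivative `b·∇G` along a vector field `b`. -/
def dd {E : Type*} [NormedAddCommGroup E] [NormedSpace ℝ E]
    (b : E → E) (G : E → ℝ) (x : E) : ℝ := fderiv ℝ G x (b x)

/-- The lifted vector fields `b̃_k(v,w) = (b_k(v-w), -b_k(v-w))` on `ℝ⁶ = ℝ³ × ℝ³`. -/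
def btilde (k : Fin 3) (x : E3 × E3) : E3 × E3 :=
  (bvec k (x.1 - x.2), -bvec k (x.1 - x.2))

/-- Full gradient on `ℝ⁶ = ℝ³ × ℝ³`, as the pair of partial gradients. -/
def grad6 (F : E3 × E3 → ℝ) (x : E3 × E3) : E3 × E3 :=
  (gradient (fun v => F (v, x.2)) x.1, gradient (fun w => F (x.1, w)) x.2)

/-- Euclidean inner product on `ℝ⁶ = ℝ³ × ℝ³`. -/
def dot6 (a b : E3 × E3) : ℝ := (inner ℝ a.1 b.1 : ℝ) + (inner ℝ a.2 b.2 : ℝ)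

/-- Squared Euclidean norm on `ℝ⁶ = ℝ³ × ℝ³`. -/
def normSq6 (a : E3 × E3) : ℝ := ‖a.1‖ ^ 2 + ‖a.2‖ ^ 2

/-- The Fisher information of `f : ℝ³ → [0,∞)`, valued in `[0,∞]`;
the integrand is `0` where `f` vanishes. -/
def fisher3 (f : E3 → ℝ) : ℝ≥0∞ :=
  ∫⁻ v, ENNReal.ofReal (if f v = 0 then 0 else ‖gradient f v‖ ^ 2 / f v)

/-- The Fisher information of `F : ℝ⁶ → [0,∞)`, valued in `[0,∞]`. -/
def fisher6 (F : E3 × E3 → ℝ) : ℝ≥0∞ :=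
  ∫⁻ x : E3 × E3, ENNReal.ofReal (if F x = 0 then 0 else normSq6 (grad6 F x) / F x)

/-- The integrand (in `w`) in the definition of the Landau collision operator. -/
def landauIntegrand (α : ℝ → ℝ) (f : E3 → ℝ) (i : Fin 3) (v w : E3) : ℝ :=
  ∑ j : Fin 3,
    α ‖v - w‖ * (‖v - w‖ ^ 2 * (if i = j then (1 : ℝ) else 0) - (v - w) i * (v - w) j) *
      (fderiv ℝ f v (EuclideanSpace.single j 1) * f w
        - f v * fderiv ℝ f w (EuclideanSpace.single j 1))

/-- The Landau collision operator `q(f)`. -/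
def landauQ (α : ℝ → ℝ) (f : E3 → ℝ) (v : E3) : ℝ :=
  ∑ i : Fin 3,
    fderiv ℝ (fun v' : E3 => ∫ w : E3, landauIntegrand α f i v' w) v
      (EuclideanSpace.single i 1)

/-- The lifted Landau operator `Q(F) = Σ_k α(|v-w|) b̃_k·∇(b̃_k·∇F)`. -/
def liftQ (α : ℝ → ℝ) (F : E3 × E3 → ℝ) (x : E3 × E3) : ℝ :=
  ∑ k : Fin 3, α ‖x.1 - x.2‖ * dd (btilde k) (dd (btilde k) F) x

/-- A function on `ℝ⁶` is well-behaved if it is `C^∞` and coincides with the Gaussian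
`exp(-|v|²-|w|²)` outside a compact set. -/
def WellBehaved (F : E3 × E3 → ℝ) : Prop :=
  ContDiff ℝ ((⊤ : ℕ∞) : WithTop ℕ∞) F ∧ ∃ K : Set (E3 × E3), IsCompact K ∧
    ∀ x ∉ K, F x = Real.exp (-‖x.1‖ ^ 2 - ‖x.2‖ ^ 2)

/-- The unit normal `n` to the level sets of `(v,w) ↦ |v-w|`. -/
def nvec (x : E3 × E3) : E3 × E3 :=
  (Real.sqrt 2 * ‖x.1 - x.2‖)⁻¹ • (x.1 - x.2, x.2 - x.1)

/-- Surface measure on the unit sphere `S²` in `ℝ³`. -/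
def sphMeasure : Measure (sphere (0 : E3) 1) := (volume : Measure E3).toSphere

/-- The matrix `(A_g(σ))_{ij} = b_i·∇(b_j·∇ g)(σ)`. -/
def matA (g : E3 → ℝ) (x : E3) : Matrix (Fin 3) (Fin 3) ℝ :=
  fun i j => dd (bvec i) (dd (bvec j) g) x

/-- Symmetric part `M_g = (A_g + A_gᵀ)/2`. -/
def matM (g : E3 → ℝ) (x : E3) : Matrix (Fin 3) (Fin 3) ℝ :=
  (1 / 2 : ℝ) • (matA g x + (matA g x)ᵀ)

/-- Squared Frobenius norm of a `3×3` matrix. -/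
def frobSq (M : Matrix (Fin 3) (Fin 3) ℝ) : ℝ := ∑ i : Fin 3, ∑ j : Fin 3, (M i j) ^ 2

open scoped Pointwise

/-! With `u = b·∇ log f` and `U = b·∇u` one has `b·∇√f = √f u / 2`, hence
`b·∇(b·∇√f) = (√f / 2) (U + u² / 2)` and `4 (b·∇(b·∇√f))² = f U² + f u² U + f u⁴ / 4`.
The field `b = e × ·` generates the rotations about `e`, which preserve the surface measure, so
`∫_{S²} b·∇g = 0` for every `C¹` function `g`. For `g = f u³` this gives
`∫ f u⁴ + 3 ∫ f u² U = 0`, and therefore `4 ∫ (b·∇(b·∇√f))² = ∫ f U² - (1/12) ∫ f u⁴ ≤ ∫ f U²`. -/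

section SphereMeasure

variable {E : Type*} [NormedAddCommGroup E] [NormedSpace ℝ E]

def LinearIsometryEquiv.sphereHomeomorph (R : E ≃ₗᵢ[ℝ] E) :
    sphere (0 : E) 1 ≃ₜ sphere (0 : E) 1 :=
  R.toHomeomorph.subtype fun x => by simp

variable [MeasurableSpace E] [BorelSpace E]

theorem LinearIsometryEquiv.measurePreserving_sphereHomeomorph {μ : Measure E}
    (R : E ≃ₗᵢ[ℝ] E) (hR : MeasurePreserving R μ μ) :
    MeasurePreserving R.sphereHomeomorph μ.toSphere μ.toSphere := by
  have hmeas := R.sphereHomeomorph.continuous.measurable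
  refine ⟨hmeas, Measure.ext fun s hs => ?_⟩
  have hcoe : ((↑) '' (R.sphereHomeomorph ⁻¹' s) : Set E) = R.symm '' ((↑) '' s) := by
    rw [← R.sphereHomeomorph.image_symm, image_image, image_image]
    rfl
  have hsmul : Ioo (0 : ℝ) 1 • R.symm '' ((↑) '' s) = R ⁻¹' (Ioo (0 : ℝ) 1 • ((↑) '' s)) := by
    rw [← image2_smul, ← image2_smul,
      image_image2_right_comm fun c x => (R.symm.map_smul c x).symm,
      R.symm.image_eq_preimage_symm, R.symm_symm]
  have hpre (t : Set E) : μ (R ⁻¹' t) = μ t := by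
    conv_rhs => rw [← hR.map_eq]
    exact (R.toHomeomorph.toMeasurableEquiv.map_apply t).symm
  rw [Measure.map_apply hmeas hs, Measure.toSphere_apply' _ (hmeas hs),
    Measure.toSphere_apply' _ hs, hcoe, hsmul, hpre]

end SphereMeasure

theorem hasDerivAt_integral_of_compactSpace {X G : Type*} [TopologicalSpace X]
    [CompactSpace X] [MeasurableSpace X] [OpensMeasurableSpace X] [NormedAddCommGroup G]
    [NormedSpace ℝ G] {μ : Measure X} [IsFiniteMeasure μ] {F F' : ℝ → X → G}
    (hF : ∀ t, Continuous (F t)) (hF' : Continuous (Function.uncurry F'))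
    (hderiv : ∀ t x, HasDerivAt (F · x) (F' t x) t) (t₀ : ℝ) :
    HasDerivAt (fun t => ∫ x, F t x ∂μ) (∫ x, F' t₀ x ∂μ) t₀ := by
  obtain ⟨C, hC⟩ := ((isCompact_closedBall t₀ 1).prod isCompact_univ).exists_bound_of_continuousOn
    hF'.continuousOn
  have hF'_cont (t : ℝ) : Continuous (F' t) := hF'.comp (Continuous.prodMk_right t)
  refine (hasDerivAt_integral_of_dominated_loc_of_deriv_le (bound := fun _ => C)
    (ball_mem_nhds t₀ one_pos)
    (Filter.Eventually.of_forall fun t => (hF t).aestronglyMeasurable_of_compactSpace)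
    ((hF t₀).integrable_of_hasCompactSupport (HasCompactSupport.of_compactSpace _))
    (hF'_cont t₀).aestronglyMeasurable_of_compactSpace
    (ae_of_all _ fun x t ht => hC (t, x) ⟨ball_subset_closedBall ht, mem_univ x⟩)
    (integrable_const C) (ae_of_all _ fun x t _ => hderiv t x)).2

theorem integral_sphere_fderiv_apply_eq_zero {E : Type*} [NormedAddCommGroup E]
    [NormedSpace ℝ E] [FiniteDimensional ℝ E] [MeasurableSpace E] [BorelSpace E]
    {μ : Measure E} [μ.IsAddHaarMeasure]
    (R : ℝ → E ≃ₗᵢ[ℝ] E) (R' : ℝ → E → E) (hR : ∀ t, MeasurePreserving (R t) μ μ)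
    (hR_zero : ∀ x, R 0 x = x) (hR_cont : Continuous fun p : ℝ × E => R p.1 p.2)
    (hR'_cont : Continuous fun p : ℝ × E => R' p.1 p.2)
    (hR' : ∀ t x, HasDerivAt (fun s => R s x) (R' t x) t) {g : E → ℝ} (hg : ContDiff ℝ 1 g) :
    ∫ σ : sphere (0 : E) 1, fderiv ℝ g σ (R' 0 σ) ∂μ.toSphere = 0 := by
  have hderiv := hasDerivAt_integral_of_compactSpace (μ := μ.toSphere)
    (F := fun t σ => g (R t σ)) (F' := fun t σ => fderiv ℝ g (R t σ) (R' t σ))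
    (fun t => hg.continuous.comp ((R t).continuous.comp continuous_subtype_val))
    (((hg.continuous_fderiv one_ne_zero).comp
      (hR_cont.comp (continuous_id.prodMap continuous_subtype_val))).clm_apply
      (hR'_cont.comp (continuous_id.prodMap continuous_subtype_val)))
    (fun t σ => ((hg.differentiable one_ne_zero _).hasFDerivAt).comp_hasDerivAt t (hR' t σ)) 0
  have hconst : (fun t => ∫ σ : sphere (0 : E) 1, g (R t σ) ∂μ.toSphere)
      = fun _ => ∫ σ : sphere (0 : E) 1, g σ ∂μ.toSphere := by
    funext t
    exact ((R t).measurePreserving_sphereHomeomorph (hR t)).integral_comp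
      (R t).sphereHomeomorph.measurableEmbedding (fun σ => g σ)
  rw [hconst] at hderiv
  simpa [hR_zero] using hderiv.unique (hasDerivAt_const _ _)

lemma cross3_eq_crossProduct (a z : E3) :
    cross3 a z = WithLp.toLp 2 (WithLp.ofLp a ⨯₃ WithLp.ofLp z) := rfl

def crossL (a : E3) : E3 →L[ℝ] E3 :=
  LinearMap.toContinuousLinearMap
    ((WithLp.linearEquiv 2 ℝ (Fin 3 → ℝ)).symm.toLinearMap ∘ₗ crossProduct (WithLp.ofLp a) ∘ₗ
      (WithLp.linearEquiv 2 ℝ (Fin 3 → ℝ)).toLinearMap)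

@[simp]
lemma crossL_apply (a z : E3) : crossL a z = cross3 a z := rfl

lemma cross3_smul_left (c : ℝ) (a z : E3) : cross3 (c • a) z = c • cross3 a z := by
  simp [cross3_eq_crossProduct]

lemma E3.norm_sq_eq (x : E3) : ‖x‖ ^ 2 = x 0 ^ 2 + x 1 ^ 2 + x 2 ^ 2 := by
  simp [EuclideanSpace.norm_sq_eq, Fin.sum_univ_three]

lemma E3.inner_eq (x y : E3) : inner ℝ x y = x 0 * y 0 + x 1 * y 1 + x 2 * y 2 := by
  simp [PiLp.inner_apply, Fin.sum_univ_three, mul_comm]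

-- Rodrigues' formula for the rotation by the angle `t` about the axis `e`, when `‖e‖ = 1`.
def rodriguesLinear (e : E3) (t : ℝ) : E3 →ₗ[ℝ] E3 :=
  Real.cos t • LinearMap.id + Real.sin t • (crossL e : E3 →ₗ[ℝ] E3)
    + ((1 - Real.cos t) • innerₗ E3 e).smulRight e

lemma rodriguesLinear_apply (e : E3) (t : ℝ) (x : E3) :
    rodriguesLinear e t x
      = Real.cos t • x + Real.sin t • crossL e x + ((1 - Real.cos t) * inner ℝ e x) • e := by
  simp [rodriguesLinear]

lemma norm_rodriguesLinear {e : E3} (he : ‖e‖ = 1) (t : ℝ) (x : E3) :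
    ‖rodriguesLinear e t x‖ = ‖x‖ := by
  have he' : e 0 ^ 2 + e 1 ^ 2 + e 2 ^ 2 = 1 := by rw [← E3.norm_sq_eq, he, one_pow]
  have hcs := Real.cos_sq_add_sin_sq t
  rw [← sq_eq_sq₀ (norm_nonneg _) (norm_nonneg _), E3.norm_sq_eq, E3.norm_sq_eq]
  simp only [Fin.isValue, rodriguesLinear_apply, crossL_apply, cross3, E3.inner_eq,
    PiLp.add_apply, PiLp.smul_apply, smul_eq_mul, cons_val_zero, cons_val_one, cons_val]
  linear_combination
    ((x 0 ^ 2 + x 1 ^ 2 + x 2 ^ 2) - (e 0 * x 0 + e 1 * x 1 + e 2 * x 2) ^ 2) * hcs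
    + (Real.sin t ^ 2 * (x 0 ^ 2 + x 1 ^ 2 + x 2 ^ 2)
        + (1 - Real.cos t) ^ 2 * (e 0 * x 0 + e 1 * x 1 + e 2 * x 2) ^ 2) * he'

def rodrigues {e : E3} (he : ‖e‖ = 1) (t : ℝ) : E3 ≃ₗᵢ[ℝ] E3 :=
  LinearIsometry.toLinearIsometryEquiv
    { rodriguesLinear e t with norm_map' := norm_rodriguesLinear he t } rfl

lemma rodrigues_apply {e : E3} (he : ‖e‖ = 1) (t : ℝ) (x : E3) :
    rodrigues he t x
      = Real.cos t • x + Real.sin t • crossL e x + ((1 - Real.cos t) * inner ℝ e x) • e :=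
  rodriguesLinear_apply e t x

lemma hasDerivAt_rodrigues {e : E3} (he : ‖e‖ = 1) (t : ℝ) (x : E3) :
    HasDerivAt (fun s => rodrigues he s x)
      ((-Real.sin t) • x + Real.cos t • crossL e x + (Real.sin t * inner ℝ e x) • e) t := by
  simp only [rodrigues_apply]
  refine (((Real.hasDerivAt_cos t).smul_const x).fun_add
    ((Real.hasDerivAt_sin t).smul_const (crossL e x))).fun_add
    ((((Real.hasDerivAt_cos t).const_sub 1).mul_const (inner ℝ e x)).smul_const e) |>.congr_deriv ?_
  simp

theorem integral_sphere_dd_cross3_eq_zero (a : E3) {g : E3 → ℝ} (hg : ContDiff ℝ 1 g) :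
    ∫ σ : sphere (0 : E3) 1, dd (cross3 a) g σ ∂(volume : Measure E3).toSphere = 0 := by
  rcases eq_or_ne a 0 with rfl | ha
  · simp [dd, cross3_eq_crossProduct]
  set e := ‖a‖⁻¹ • a
  have he : ‖e‖ = 1 := norm_smul_inv_norm ha
  have hunit : ∫ σ : sphere (0 : E3) 1, dd (cross3 e) g σ ∂(volume : Measure E3).toSphere = 0 := by
    simpa [dd, rodrigues_apply] using integral_sphere_fderiv_apply_eq_zero (μ := volume)
      (rodrigues he)
      (fun t x => (-Real.sin t) • x + Real.cos t • crossL e x + (Real.sin t * inner ℝ e x) • e)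
      (fun t => (rodrigues he t).measurePreserving) (by simp [rodrigues_apply])
      (by simp only [rodrigues_apply]; fun_prop) (by fun_prop) (hasDerivAt_rodrigues he) hg
  have hscale (σ : E3) : dd (cross3 a) g σ = ‖a‖ * dd (cross3 e) g σ := by
    rw [dd, dd, ← smul_eq_mul, ← map_smul, ← cross3_smul_left,
      smul_inv_smul₀ (norm_ne_zero_iff.2 ha)]
  simp_rw [hscale]
  rw [integral_const_mul, hunit, mul_zero]
section DirectionalDerivative

variable {E : Type*} [NormedAddCommGroup E] [NormedSpace ℝ E] {b : E → E} {f g : E → ℝ} {x : E}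

theorem ContDiff.dd {n : WithTop ℕ∞} (hg : ContDiff ℝ (n + 1) g) (hb : ContDiff ℝ n b) :
    ContDiff ℝ n (dd b g) :=
  (hg.fderiv_right le_rfl).clm_apply hb

lemma dd_mul (hf : DifferentiableAt ℝ f x) (hg : DifferentiableAt ℝ g x) :
    dd b (fun y => f y * g y) x = f x * dd b g x + g x * dd b f x := by
  simp [dd, fderiv_fun_mul hf hg]

lemma dd_pow (n : ℕ) (hg : DifferentiableAt ℝ g x) :
    dd b (fun y => g y ^ n) x = n * g x ^ (n - 1) * dd b g x := by
  simp [dd, fderiv_fun_pow n hg]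

lemma dd_div_const (hg : DifferentiableAt ℝ g x) (c : ℝ) :
    dd b (fun y => g y / c) x = dd b g x / c := by
  simp [dd, div_eq_mul_inv, fderiv_mul_const hg, mul_comm]

lemma dd_log (hf : DifferentiableAt ℝ f x) (hx : f x ≠ 0) :
    dd b (fun y => Real.log (f y)) x = dd b f x / f x := by
  simp [dd, hf.hasFDerivAt.log hx |>.fderiv, div_eq_inv_mul]

lemma dd_sqrt (hf : DifferentiableAt ℝ f x) (hx : 0 < f x) :
    dd b (fun y => √(f y)) x = √(f x) / 2 * dd b (fun y => Real.log (f y)) x := by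
  have hsqrt : √(f x) ≠ 0 := Real.sqrt_ne_zero'.2 hx
  rw [dd_log hf hx.ne', dd, dd, (hf.hasFDerivAt.sqrt hx.ne').fderiv]
  nth_rw 3 [← Real.mul_self_sqrt hx.le]
  rw [_root_.smul_apply, smul_eq_mul]
  field_simp

lemma dd_dd_sqrt (hf : Differentiable ℝ f) (hpos : ∀ y, 0 < f y)
    (hu : DifferentiableAt ℝ (dd b fun y => Real.log (f y)) x) :
    dd b (dd b fun y => √(f y)) x
      = √(f x) / 2 * (dd b (dd b fun y => Real.log (f y)) x
          + (dd b (fun y => Real.log (f y)) x) ^ 2 / 2) := by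
  have hv : dd b (fun y => √(f y)) = fun y => √(f y) / 2 * dd b (fun y => Real.log (f y)) y :=
    funext fun y => dd_sqrt (hf y) (hpos y)
  have hsqrt : DifferentiableAt ℝ (fun y => √(f y)) x := (hf x).sqrt (hpos x).ne'
  have hsqrt_half : DifferentiableAt ℝ (fun y => √(f y) / 2) x := by
    simpa only [div_eq_mul_inv] using hsqrt.mul_const (2⁻¹ : ℝ)
  rw [hv, dd_mul hsqrt_half hu, dd_div_const hsqrt, dd_sqrt (hf x) (hpos x)]
  ring

lemma dd_mul_pow_three_dd_log (hf : Differentiable ℝ f) (hpos : ∀ y, 0 < f y)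
    (hu : DifferentiableAt ℝ (dd b fun y => Real.log (f y)) x) :
    dd b (fun y => f y * (dd b (fun y => Real.log (f y)) y) ^ 3) x
      = f x * (dd b (fun y => Real.log (f y)) x) ^ 4
        + 3 * (f x * (dd b (fun y => Real.log (f y)) x) ^ 2
          * dd b (dd b fun y => Real.log (f y)) x) := by
  have hdf : dd b f x = f x * dd b (fun y => Real.log (f y)) x := by
    rw [dd_log (hf x) (hpos x).ne', mul_div_cancel₀ _ (hpos x).ne']
  rw [dd_mul (hf x) (hu.fun_pow 3), dd_pow 3 hu, hdf]
  push_cast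
  ring

end DirectionalDerivative

theorem four_mul_integral_sq_le_integral_sq_mul {X : Type*} [TopologicalSpace X] [CompactSpace X]
    [MeasurableSpace X] [OpensMeasurableSpace X] (μ : Measure X) [IsFiniteMeasure μ]
    {f u U V : X → ℝ} (hf : Continuous f) (hu : Continuous u) (hU : Continuous U)
    (hf_nonneg : ∀ x, 0 ≤ f x) (hV : ∀ x, V x = √(f x) / 2 * (U x + u x ^ 2 / 2))
    (hibp : ∫ x, f x * u x ^ 4 + 3 * (f x * u x ^ 2 * U x) ∂μ = 0) :
    4 * ∫ x, V x ^ 2 ∂μ ≤ ∫ x, U x ^ 2 * f x ∂μ := by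
  have hint {φ : X → ℝ} (hφ : Continuous φ) : Integrable φ μ :=
    hφ.integrable_of_hasCompactSupport (.of_compactSpace φ)
  have hV' : Continuous V := by
    rw [funext hV]
    fun_prop
  have hpointwise (x : X) : U x ^ 2 * f x - 4 * V x ^ 2
      = f x * u x ^ 4 / 12 - (f x * u x ^ 4 + 3 * (f x * u x ^ 2 * U x)) / 3 := by
    rw [hV, mul_pow, div_pow, Real.sq_sqrt (hf_nonneg x)]
    ring
  have hdiff : ∫ x, U x ^ 2 * f x ∂μ - 4 * ∫ x, V x ^ 2 ∂μ = (∫ x, f x * u x ^ 4 ∂μ) / 12 := by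
    rw [← integral_const_mul, ← integral_sub (hint (by fun_prop)) (hint (by fun_prop)),
      integral_congr_ae (ae_of_all _ hpointwise),
      integral_sub (hint (by fun_prop)) (hint (by fun_prop)), integral_div, integral_div, hibp,
      zero_div, sub_zero]
  have hnonneg : 0 ≤ ∫ x, f x * u x ^ 4 ∂μ :=
    integral_nonneg fun x => mul_nonneg (hf_nonneg x) (by positivity)
  linarith

theorem single_direction_inequality_general
    (f : E3 → ℝ) (hf : ContDiff ℝ 3 f) (hfpos : ∀ x, 0 < f x)
    (e : E3) :
    4 * ∫ σ : sphere (0 : E3) 1,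
        (dd (fun z => cross3 e z)
          (dd (fun z => cross3 e z) (fun x => Real.sqrt (f x))) σ) ^ 2 ∂sphMeasure
      ≤ ∫ σ : sphere (0 : E3) 1,
          (dd (fun z => cross3 e z)
            (dd (fun z => cross3 e z) (fun x => Real.log (f x))) σ) ^ 2
            * f σ ∂sphMeasure := by
  unfold sphMeasure
  set b : E3 → E3 := fun z => cross3 e z
  set u := dd b fun x => Real.log (f x)
  have hb : ContDiff ℝ 2 b := (crossL e).contDiff
  have hu : ContDiff ℝ 2 u := (hf.log fun x => (hfpos x).ne').dd hb
  have hU : ContDiff ℝ 1 (dd b u) := hu.dd (hb.of_le one_le_two)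
  have hfd : Differentiable ℝ f := hf.differentiable (by norm_num)
  have hud : Differentiable ℝ u := hu.differentiable two_ne_zero
  refine four_mul_integral_sq_le_integral_sq_mul _ (by fun_prop)
    (hu.continuous.comp continuous_subtype_val) (hU.continuous.comp continuous_subtype_val)
    (fun σ => (hfpos σ).le) (fun σ => dd_dd_sqrt hfd hfpos (hud σ)) ?_
  rw [← integral_sphere_dd_cross3_eq_zero e (g := fun y => f y * u y ^ 3)
    ((hf.of_le (by norm_num)).mul ((hu.of_le one_le_two).pow 3))]
  exact integral_congr_ae (ae_of_all _ fun σ => (dd_mul_pow_three_dd_log hfd hfpos (hud σ)).symm)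

/-- **Pure second derivative trick** (Lemma 8.6 in the paper):
`∫_{S²} (b_e·∇(b_e·∇ log f))² f ≥ 4 ∫_{S²} (b_e·∇(b_e·∇ √f))²`. -/
theorem single_direction_inequality
    (f : E3 → ℝ) (hf : ContDiff ℝ 3 f) (hfpos : ∀ x, 0 < f x)
    (e : E3) (he : e ∈ sphere (0 : E3) 1) :
    4 * ∫ σ : sphere (0 : E3) 1,
        (dd (fun z => cross3 e z)
          (dd (fun z => cross3 e z) (fun x => Real.sqrt (f x))) σ) ^ 2 ∂sphMeasure
      ≤ ∫ σ : sphere (0 : E3) 1,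
          (dd (fun z => cross3 e z)
            (dd (fun z => cross3 e z) (fun x => Real.log (f x))) σ) ^ 2
            * f σ ∂sphMeasure :=
  single_direction_inequality_general f hf hfpos e
end
end

section
/- Let A be a real 3×3 matrix with rank A ≤ 2, and let M = (A + Aᵀ)/2 be its symmetric part. Then ‖M‖² ≥ (1/2)·( tr M )², where ‖·‖ denotes the Frobenius norm. -/
open MeasureTheory Real Set Metric Matrix
open scoped ENNReal

noncomputable section

/-!
A matrix of rank at most 2 kills some `x ≠ 0`, so the quadratic form of its symmetric part `M`
vanishes at `x`. Pairing `M` (Frobenius inner product) with `P = |x|² I - x xᵀ`, which is `|x|²`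
times the orthogonal projection onto `x⊥`, gives `⟨M, P⟩ = |x|² tr M - xᵀ M x = |x|² tr M`, while
`‖P‖² = (n - 1) |x|⁴`. Cauchy–Schwarz then yields `(tr M)² ≤ (n - 1) ‖M‖²`, and `n = 3`.
-/

namespace Matrix

variable {n R : Type*} [Fintype n]

section CommRing

variable [CommRing R] [DecidableEq n]

def scaledPerpProj (x : n → R) : Matrix n n R := (x ⬝ᵥ x) • 1 - vecMulVec x x

theorem sum_sum_mul_scaledPerpProj (B : Matrix n n R) (x : n → R) :
    ∑ i, ∑ j, B i j * scaledPerpProj x i j = (x ⬝ᵥ x) * B.trace - x ⬝ᵥ B *ᵥ x := by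
  simp only [scaledPerpProj, dotProduct, sub_apply, smul_apply, one_apply, smul_eq_mul, mul_ite,
    mul_one, mul_zero, vecMulVec_apply, mul_sub, Finset.mul_sum, Finset.sum_sub_distrib,
    Finset.sum_ite_eq, Finset.mem_univ, ↓reduceIte, trace, diag_apply, mulVec]
  congr 1
  · exact Fintype.sum_congr _ _ fun i => by rw [← Finset.mul_sum, mul_comm]
  · exact Fintype.sum_congr _ _ fun i => Fintype.sum_congr _ _ fun j => by ring

theorem sum_sum_sq_scaledPerpProj (x : n → R) :
    ∑ i, ∑ j, scaledPerpProj x i j ^ 2 = (Fintype.card n - 1) * (x ⬝ᵥ x) ^ 2 := by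
  simp only [scaledPerpProj, dotProduct, sub_apply, smul_apply, one_apply, smul_eq_mul, mul_ite,
    mul_one, mul_zero, vecMulVec_apply, sub_sq, ite_pow, ne_eq, OfNat.ofNat_ne_zero,
    not_false_eq_true, zero_pow, Finset.mul_sum, ite_mul, zero_mul, Finset.sum_add_distrib,
    Finset.sum_sub_distrib, Finset.sum_ite_eq, Finset.mem_univ, ↓reduceIte, Finset.sum_const,
    Finset.card_univ, nsmul_eq_mul]
  simp only [← sq, mul_pow, ← Finset.mul_sum, ← Finset.sum_mul]
  ring

end CommRing

theorem det_eq_zero_of_rank_lt_card [DecidableEq n] [Field R] {A : Matrix n n R}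
    (hA : A.rank < Fintype.card n) : A.det = 0 := by
  by_contra h
  exact hA.ne (rank_of_det_ne_zero h)

variable [Field R] [LinearOrder R] [IsStrictOrderedRing R]

theorem sq_sum_sum_mul_le (B C : Matrix n n R) :
    (∑ i, ∑ j, B i j * C i j) ^ 2 ≤ (∑ i, ∑ j, B i j ^ 2) * ∑ i, ∑ j, C i j ^ 2 := by
  simpa only [Fintype.sum_prod_type] using
    Finset.sum_mul_sq_le_sq_mul_sq Finset.univ (fun p : n × n => B p.1 p.2) (fun p => C p.1 p.2)

theorem dotProduct_mulVec_symmetricPart (A : Matrix n n R) (x : n → R) :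
    x ⬝ᵥ ((1 / 2 : R) • (A + Aᵀ)) *ᵥ x = x ⬝ᵥ A *ᵥ x := by
  have hT : x ⬝ᵥ Aᵀ *ᵥ x = x ⬝ᵥ A *ᵥ x := by
    rw [dotProduct_mulVec, vecMul_transpose, dotProduct_comm]
  rw [smul_mulVec, add_mulVec, dotProduct_smul, dotProduct_add, hT, smul_eq_mul]
  ring

theorem sq_trace_le_of_dotProduct_mulVec_eq_zero {B : Matrix n n R} {x : n → R}
    (hx : x ≠ 0) (hBx : x ⬝ᵥ B *ᵥ x = 0) :
    B.trace ^ 2 ≤ (Fintype.card n - 1) * ∑ i, ∑ j, B i j ^ 2 := by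
  classical
  have hs : 0 < (x ⬝ᵥ x) ^ 2 := by positivity [dotProduct_self_eq_zero.not.mpr hx]
  have key : ((x ⬝ᵥ x) * B.trace) ^ 2 ≤
      (∑ i, ∑ j, B i j ^ 2) * ((Fintype.card n - 1) * (x ⬝ᵥ x) ^ 2) := by
    simpa [sum_sum_mul_scaledPerpProj, hBx, sum_sum_sq_scaledPerpProj] using
      sq_sum_sum_mul_le B (scaledPerpProj x)
  rw [mul_pow] at key
  exact le_of_mul_le_mul_right (by linarith) hs

end Matrix

/-- **A linear algebra lemma** (Lemma 8.7 in the paper): for a real `3×3` matrix of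
rank at most 2, the squared Frobenius norm of the symmetric part dominates half the
squared trace. -/
theorem rank_two_symmetric_part
    (A : Matrix (Fin 3) (Fin 3) ℝ) (hA : A.rank ≤ 2) :
    (1 / 2 : ℝ) * (Matrix.trace ((1 / 2 : ℝ) • (A + Aᵀ))) ^ 2
      ≤ frobSq ((1 / 2 : ℝ) • (A + Aᵀ)) := by
  obtain ⟨x, hx, hAx⟩ := exists_mulVec_eq_zero_iff.mpr
    (det_eq_zero_of_rank_lt_card (hA.trans_lt (by simp)))
  have h := sq_trace_le_of_dotProduct_mulVec_eq_zero hx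
    (by rw [dotProduct_mulVec_symmetricPart, hAx, dotProduct_zero])
  rw [show (Fintype.card (Fin 3) : ℝ) - 1 = 2 by norm_num] at h
  unfold frobSq
  linarith
end
end
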